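/- arXiv:2002.00138 — 3 statements merged into one kernel-verified Lean document; each statement's English description precedes it below -/
import Mathlib

section
/- Let A be an n×n matrix with nonnegative entries, b₁₁ and b₂₂ its two smallest diagonal entries, and x_{jk} = min{a_{jk}, a_{kj}}. Then ρ(A) ≥ (b₁₁ + b₂₂)/2 + max_k ( ∑_{j ≠ k} x_{jk}² )^{1/2}. -/
open Matrix BigOperators Finset Filter Topology
open scoped NNReal ENNReal

attribute [local instance] Matrix.linftyOpNormedRing Matrix.linftyOpNormedAlgebra

/-- The spectral radius of a real square matrix: the supremum of the moduli
of its complex eigenvalues. -/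
noncomputable def specRad {n : ℕ} (A : Matrix (Fin n) (Fin n) ℝ) : ℝ :=
  sSup ((fun μ : ℂ => ‖μ‖) '' spectrum ℂ (A.map Complex.ofReal))

lemma pow_entry_bounds {n : ℕ} {A B : Matrix (Fin n) (Fin n) ℝ}
    (hB0 : ∀ i j, 0 ≤ B i j) (hBA : ∀ i j, B i j ≤ A i j) (m : ℕ) :
    ∀ i j, 0 ≤ (B ^ m) i j ∧ (B ^ m) i j ≤ (A ^ m) i j := by
  induction m with
  | zero =>
    intro i j
    simp only [pow_zero]
    by_cases h : i = j <;> simp [Matrix.one_apply, h]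
  | succ m ih =>
    intro i j
    rw [pow_succ, pow_succ, Matrix.mul_apply, Matrix.mul_apply]
    constructor
    · exact Finset.sum_nonneg fun l _ => mul_nonneg (ih i l).1 (hB0 l j)
    · refine Finset.sum_le_sum fun l _ => mul_le_mul (ih i l).2 (hBA l j) (hB0 l j) ?_
      exact le_trans (ih i l).1 (ih i l).2

lemma rowsum_le_norm {n : ℕ} (M : Matrix (Fin n) (Fin n) ℝ) (hM : ∀ i j, 0 ≤ M i j) (i : Fin n) :
    ∑ j, M i j ≤ ‖M.map Complex.ofReal‖ := by
  have h1 : (∑ j, ‖(M.map Complex.ofReal) i j‖₊ : ℝ≥0) ≤ ‖M.map Complex.ofReal‖₊ := by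
    rw [Matrix.linfty_opNNNorm_def]
    exact Finset.le_sup (f := fun i => ∑ j, ‖(M.map Complex.ofReal) i j‖₊) (Finset.mem_univ i)
  have h2 := NNReal.coe_le_coe.mpr h1
  push_cast at h2
  calc ∑ j, M i j = ∑ j, ((‖(M.map Complex.ofReal) i j‖₊ : ℝ)) := by
        refine Finset.sum_congr rfl fun j _ => ?_
        rw [coe_nnnorm]
        simp [Matrix.map_apply, Complex.norm_real, Real.norm_eq_abs, abs_of_nonneg (hM i j)]
    _ ≤ _ := by simpa using h2

lemma map_ofReal_pow {n : ℕ} (A : Matrix (Fin n) (Fin n) ℝ) (m : ℕ) :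
    (A.map Complex.ofReal) ^ m = (A ^ m).map Complex.ofReal := by
  have : A.map Complex.ofReal = Complex.ofRealHom.mapMatrix A := rfl
  rw [this, ← map_pow]; rfl

lemma diag_pair {n : ℕ} (hn : 2 ≤ n) (A : Matrix (Fin n) (Fin n) ℝ)
    (σ : Equiv.Perm (Fin n)) (hσ : Monotone (A.diag ∘ σ)) {j k : Fin n} (hjk : j ≠ k) :
    A.diag (σ ⟨0, by linarith⟩) + A.diag (σ ⟨1, by linarith⟩) ≤ A.diag j + A.diag k := by
  set z0 : Fin n := ⟨0, by omega⟩ with hz0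
  set z1 : Fin n := ⟨1, by omega⟩ with hz1
  obtain ⟨m, rfl⟩ : ∃ m, σ m = j := ⟨σ.symm j, σ.apply_symm_apply j⟩
  obtain ⟨m', rfl⟩ : ∃ m', σ m' = k := ⟨σ.symm k, σ.apply_symm_apply k⟩
  have hmm : m ≠ m' := fun h => hjk (by rw [h])
  have h0 : ∀ p : Fin n, A.diag (σ z0) ≤ A.diag (σ p) := fun p => hσ (by simp [hz0, Fin.le_def])
  have h1 : ∀ p : Fin n, p ≠ z0 → A.diag (σ z1) ≤ A.diag (σ p) := by
    intro p hp
    apply hσ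
    have hv : p.val ≠ 0 := fun h => hp (Fin.ext (by simp [hz0, h]))
    simp only [hz1, Fin.le_def]
    omega
  by_cases hm : m = z0
  · have hm' : m' ≠ z0 := fun h => hmm (hm.trans h.symm)
    have := h1 m' hm'
    have heq : A.diag (σ z0) = A.diag (σ m) := by rw [hm]
    linarith
  · have := h1 m hm
    have := h0 m'
    linarith

lemma le_specRad_of_pow {n : ℕ} (hn : 2 ≤ n) (A : Matrix (Fin n) (Fin n) ℝ) (r : ℝ) (hr : 0 ≤ r)
    (h : ∀ t : ℕ, r ^ (2 ^ t) ≤ (n : ℝ) * ‖(A.map Complex.ofReal) ^ (2 ^ t)‖) :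
    r ≤ specRad A := by
  have hne : Nonempty (Fin n) := ⟨⟨0, by omega⟩⟩
  set A' := A.map Complex.ofReal with hA'
  have hfin : (spectrum ℂ A').Finite := Matrix.finite_spectrum A'
  have hspne : (spectrum ℂ A').Nonempty := spectrum.nonempty A'
  have hbdd : BddAbove ((fun μ : ℂ => ‖μ‖) '' spectrum ℂ A') :=
    (hfin.image _).bddAbove
  have hspec_le : ∀ μ ∈ spectrum ℂ A', ‖μ‖ ≤ specRad A := fun μ hμ =>
    le_csSup hbdd ⟨μ, hμ, rfl⟩
  have hρ0 : 0 ≤ specRad A := by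
    obtain ⟨μ, hμ⟩ := hspne
    exact le_trans (norm_nonneg μ) (hspec_le μ hμ)
  have hL : spectralRadius ℂ A' ≤ ENNReal.ofReal (specRad A) := by
    rw [spectralRadius]
    refine iSup₂_le fun μ hμ => ?_
    rw [← enorm_eq_nnnorm, ← ofReal_norm]
    exact ENNReal.ofReal_le_ofReal (hspec_le μ hμ)
  by_contra hlt
  push_neg at hlt
  obtain ⟨c, hc1, hc2⟩ := exists_between hlt
  have hc0 : 0 < c := lt_of_le_of_lt hρ0 hc1
  have hLc : spectralRadius ℂ A' < ENNReal.ofReal c :=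
    lt_of_le_of_lt hL ((ENNReal.ofReal_lt_ofReal_iff hc0).mpr hc1)
  have gel := spectrum.pow_norm_pow_one_div_tendsto_nhds_spectralRadius A'
  have hev : ∀ᶠ m : ℕ in atTop,
      ENNReal.ofReal (‖A' ^ m‖ ^ (1 / (m : ℝ))) < ENNReal.ofReal c :=
    gel.eventually_lt_const hLc
  -- convert to real inequality on norms
  have hev2 : ∀ᶠ m : ℕ in atTop, ‖A' ^ m‖ < c ^ m := by
    filter_upwards [hev, eventually_ge_atTop 1] with m hm hm1
    have hcast : (0:ℝ) < (m:ℝ) := by exact_mod_cast hm1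
    have hlt : ‖A' ^ m‖ ^ (1 / (m : ℝ)) < c :=
      (ENNReal.ofReal_lt_ofReal_iff hc0).mp hm
    have hnn : (0:ℝ) ≤ ‖A' ^ m‖ ^ (1 / (m : ℝ)) := Real.rpow_nonneg (norm_nonneg _) _
    have := pow_lt_pow_left₀ hlt hnn (n := m) (by omega)
    calc ‖A' ^ m‖ = (‖A' ^ m‖ ^ (1 / (m : ℝ))) ^ m := by
          rw [← Real.rpow_natCast (‖A' ^ m‖ ^ (1 / (m : ℝ))) m, ← Real.rpow_mul (norm_nonneg _)]
          rw [one_div_mul_cancel (ne_of_gt hcast), Real.rpow_one]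
      _ < c ^ m := this
  -- pick t with 2^t large and (r/c)^(2^t) > n
  have hrc : 1 < r / c := (one_lt_div hc0).mpr hc2
  have h2t : Tendsto (fun t : ℕ => 2 ^ t) atTop atTop :=
    tendsto_pow_atTop_atTop_of_one_lt (by norm_num)
  have hev3 : ∀ᶠ m : ℕ in atTop, (n : ℝ) < (r / c) ^ m :=
    (tendsto_pow_atTop_atTop_of_one_lt hrc).eventually_gt_atTop n
  obtain ⟨t, hta, htb⟩ := (h2t.eventually (hev2.and hev3)).exists
  have hcm : (0:ℝ) < c ^ (2 ^ t) := pow_pos hc0 _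
  have h1 : r ^ (2 ^ t) ≤ (n : ℝ) * ‖A' ^ (2 ^ t)‖ := h t
  have h2 : (n : ℝ) * ‖A' ^ (2 ^ t)‖ ≤ (n:ℝ) * c ^ (2 ^ t) :=
    mul_le_mul_of_nonneg_left hta.le (by positivity)
  have h3 : (n : ℝ) * c ^ (2 ^ t) < r ^ (2 ^ t) := by
    have := htb
    rw [div_pow] at this
    rw [lt_div_iff₀ hcm] at this
    linarith
  linarith

lemma main_aux {n : ℕ} (hn : 2 ≤ n) (A : Matrix (Fin n) (Fin n) ℝ)
    (hnn : ∀ i j, 0 ≤ A i j) (k : Fin n) (u : Fin n → ℝ)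
    (hu0 : ∀ j, 0 ≤ u j) (huk : u k = 0) (hu1 : ∑ j, u j ^ 2 = 1) :
    (A k k + ∑ j, u j ^ 2 * A j j) / 2 + ∑ j, u j * min (A j k) (A k j)
      ≤ specRad A := by
  classical
  set B : Matrix (Fin n) (Fin n) ℝ := Matrix.of (fun i j => min (A i j) (A j i)) with hBdef
  have hB0 : ∀ i j, 0 ≤ B i j := fun i j => le_min (hnn i j) (hnn j i)
  have hBA : ∀ i j, B i j ≤ A i j := fun i j => min_le_left _ _
  have hBsymm : Bᵀ = B := by
    ext i j
    simp only [Matrix.transpose_apply, hBdef, Matrix.of_apply]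
    exact min_comm _ _
  set e : Fin n → ℝ := fun j => if j = k then 1 else 0 with hedef
  have sqrt2_pos : (0:ℝ) < Real.sqrt 2 := Real.sqrt_pos.mpr (by norm_num)
  set v : Fin n → ℝ := fun j => (e j + u j) / Real.sqrt 2 with hvdef
  have hv0 : ∀ j, 0 ≤ v j := by
    intro j
    apply div_nonneg _ sqrt2_pos.le
    have : (0:ℝ) ≤ e j := by simp only [hedef]; split <;> norm_num
    linarith [hu0 j]
  have he2 : ∀ j, e j ^ 2 = e j := by
    intro j; simp only [hedef]; split <;> norm_num
  have heu : ∀ j, e j * u j = 0 := by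
    intro j; simp only [hedef]; split
    · simp [*]
    · simp
  have hvsq : ∀ j, v j ^ 2 = (e j ^ 2 + 2 * (e j * u j) + u j ^ 2) / 2 := by
    intro j
    simp only [hvdef]
    rw [div_pow, Real.sq_sqrt (by norm_num : (0:ℝ) ≤ 2)]
    ring
  have hesum : ∑ j, e j = 1 := by simp [hedef]
  have hvsum : ∑ j, v j ^ 2 = 1 := by
    rw [Finset.sum_congr rfl (fun j _ => hvsq j)]
    rw [← Finset.sum_div]
    rw [Finset.sum_add_distrib, Finset.sum_add_distrib]
    rw [Finset.sum_congr rfl (fun j _ => he2 j), hesum]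
    have : ∑ j, 2 * (e j * u j) = 0 := by
      apply Finset.sum_eq_zero; intro j _; rw [heu j]; ring
    rw [this, hu1]
    norm_num
  have hvle1 : ∀ j, v j ≤ 1 := by
    intro j
    have h1 : v j ^ 2 ≤ 1 := by
      rw [← hvsum]
      exact Finset.single_le_sum (fun i _ => sq_nonneg (v i)) (Finset.mem_univ j)
    nlinarith [hv0 j]
  set a : ℕ → ℝ := fun m => v ⬝ᵥ ((B ^ m) *ᵥ v) with hadef
  have hmul : Real.sqrt 2 * Real.sqrt 2 = 2 := Real.mul_self_sqrt (by norm_num)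
  have hBs : ∀ i j, B i j = B j i := by
    intro i j; simp only [hBdef, Matrix.of_apply]; exact min_comm _ _
  have ha1 : a 1 = (∑ i, ∑ j, (e i + u i) * (B i j * (e j + u j))) / 2 := by
    simp only [hadef, pow_one, dotProduct, Matrix.mulVec, hvdef]
    rw [Finset.sum_div]
    refine Finset.sum_congr rfl fun i _ => ?_
    rw [Finset.mul_sum, Finset.sum_div]
    refine Finset.sum_congr rfl fun j _ => ?_
    have hx : (e i + u i) / Real.sqrt 2 * (B i j * ((e j + u j) / Real.sqrt 2))
        = (e i + u i) * (B i j * (e j + u j)) / (Real.sqrt 2 * Real.sqrt 2) := by ring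
    rw [hx, hmul]
  have hsplit : (∑ i, ∑ j, (e i + u i) * (B i j * (e j + u j)))
      = (∑ i, ∑ j, e i * (B i j * e j)) + (∑ i, ∑ j, e i * (B i j * u j))
        + (∑ i, ∑ j, u i * (B i j * e j)) + (∑ i, ∑ j, u i * (B i j * u j)) := by
    rw [← Finset.sum_add_distrib, ← Finset.sum_add_distrib, ← Finset.sum_add_distrib]
    refine Finset.sum_congr rfl fun i _ => ?_
    rw [← Finset.sum_add_distrib, ← Finset.sum_add_distrib, ← Finset.sum_add_distrib]
    refine Finset.sum_congr rfl fun j _ => ?_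
    ring
  have hT1 : (∑ i, ∑ j, e i * (B i j * e j)) = A k k := by
    simp only [hedef, ite_mul, mul_ite, mul_one, mul_zero, zero_mul, one_mul]
    simp [Finset.sum_ite_eq', hBdef, min_self]
  have hT2 : (∑ i, ∑ j, e i * (B i j * u j)) = ∑ j, u j * min (A j k) (A k j) := by
    simp only [hedef, ite_mul, one_mul, zero_mul]
    have hpull : ∀ x : Fin n, (∑ x1 : Fin n, if x = k then B x x1 * u x1 else 0)
        = if x = k then ∑ x1 : Fin n, B x x1 * u x1 else 0 := by
      intro x; split <;> simp
    rw [Finset.sum_congr rfl fun x _ => hpull x, Finset.sum_ite_eq' Finset.univ k]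
    simp only [Finset.mem_univ, if_true]
    refine Finset.sum_congr rfl fun j _ => ?_
    rw [hBs k j]
    simp only [hBdef, Matrix.of_apply]
    exact mul_comm _ _
  have hT3 : (∑ i, ∑ j, u i * (B i j * e j)) = ∑ j, u j * min (A j k) (A k j) := by
    refine Finset.sum_congr rfl fun i _ => ?_
    simp only [hedef, mul_ite, mul_one, mul_zero]
    rw [Finset.sum_ite_eq' Finset.univ k]
    simp [hBdef]
  have hT4 : (∑ j, u j ^ 2 * A j j) ≤ ∑ i, ∑ j, u i * (B i j * u j) := by
    refine Finset.sum_le_sum fun i _ => ?_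
    have h1 : u i ^ 2 * A i i = u i * (B i i * u i) := by
      simp only [hBdef, Matrix.of_apply, min_self]; ring
    rw [h1]
    exact Finset.single_le_sum
      (fun j _ => mul_nonneg (hu0 i) (mul_nonneg (hB0 i j) (hu0 j))) (Finset.mem_univ i)
  have halow : (A k k + ∑ j, u j ^ 2 * A j j) / 2 + ∑ j, u j * min (A j k) (A k j) ≤ a 1 := by
    rw [ha1, hsplit, hT1, hT2, hT3]
    linarith
  have hr0 : 0 ≤ a 1 := by
    refine le_trans ?_ halow
    have h1 : 0 ≤ ∑ j, u j ^ 2 * A j j :=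
      Finset.sum_nonneg fun j _ => mul_nonneg (sq_nonneg _) (hnn j j)
    have h2 : 0 ≤ ∑ j, u j * min (A j k) (A k j) :=
      Finset.sum_nonneg fun j _ => mul_nonneg (hu0 j) (le_min (hnn j k) (hnn k j))
    have := hnn k k
    positivity
  have hstep : ∀ p, a p ^ 2 ≤ a (p + p) := by
    intro p
    have hPsym : (B ^ p)ᵀ = B ^ p := by rw [Matrix.transpose_pow, hBsymm]
    have hw : a (p + p) = ∑ i, ((B ^ p) *ᵥ v) i ^ 2 := by
      show v ⬝ᵥ ((B ^ (p + p)) *ᵥ v) = _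
      rw [pow_add, ← Matrix.mulVec_mulVec, Matrix.dotProduct_mulVec,
        ← Matrix.mulVec_transpose, hPsym]
      simp only [dotProduct]
      exact Finset.sum_congr rfl fun i _ => (sq ((B ^ p *ᵥ v) i)).symm
    have hap : a p = ∑ i, v i * ((B ^ p) *ᵥ v) i := rfl
    rw [hw, hap]
    calc (∑ i, v i * ((B ^ p) *ᵥ v) i) ^ 2
        ≤ (∑ i, v i ^ 2) * ∑ i, ((B ^ p) *ᵥ v) i ^ 2 :=
          Finset.sum_mul_sq_le_sq_mul_sq Finset.univ v _
      _ = ∑ i, ((B ^ p) *ᵥ v) i ^ 2 := by rw [hvsum, one_mul]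
  have hpowt : ∀ t : ℕ, a 1 ^ (2 ^ t) ≤ a (2 ^ t) := by
    intro t
    induction t with
    | zero => simp
    | succ t ih =>
      have h1 : a 1 ^ (2 ^ (t + 1)) = (a 1 ^ (2 ^ t)) ^ 2 := by
        rw [← pow_mul, pow_succ]
      have h2 : (a 1 ^ (2 ^ t)) ^ 2 ≤ (a (2 ^ t)) ^ 2 := by
        apply pow_le_pow_left₀ (pow_nonneg hr0 _) ih
      have h3 : a (2 ^ t) ^ 2 ≤ a (2 ^ t + 2 ^ t) := hstep _
      have h4 : (2 : ℕ) ^ t + 2 ^ t = 2 ^ (t + 1) := by ring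
      rw [h1]
      rw [← h4]
      exact le_trans h2 h3
  have hbound : ∀ m : ℕ, a m ≤ (n : ℝ) * ‖(A.map Complex.ofReal) ^ m‖ := by
    intro m
    have hEnt := pow_entry_bounds hB0 hBA m
    have hAm0 : ∀ i j, 0 ≤ (A ^ m) i j := fun i j =>
      (pow_entry_bounds hnn (fun i j => le_refl _) m i j).1
    rw [map_ofReal_pow]
    have h1 : a m ≤ ∑ i, ∑ j, (A ^ m) i j := by
      show v ⬝ᵥ ((B ^ m) *ᵥ v) ≤ _
      simp only [dotProduct, Matrix.mulVec]
      refine Finset.sum_le_sum fun i _ => ?_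
      have hX0 : 0 ≤ ∑ j, (B ^ m) i j * v j :=
        Finset.sum_nonneg fun j _ => mul_nonneg (hEnt i j).1 (hv0 j)
      calc v i * ∑ j, (B ^ m) i j * v j ≤ ∑ j, (B ^ m) i j * v j :=
            mul_le_of_le_one_left hX0 (hvle1 i)
        _ ≤ ∑ j, (A ^ m) i j := by
            refine Finset.sum_le_sum fun j _ => ?_
            calc (B ^ m) i j * v j ≤ (A ^ m) i j * 1 :=
                  mul_le_mul (hEnt i j).2 (hvle1 j) (hv0 j) (hAm0 i j)
              _ = (A ^ m) i j := mul_one _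
    have h2 : ∑ i, ∑ j, (A ^ m) i j ≤ ∑ _i : Fin n, ‖(A ^ m).map Complex.ofReal‖ :=
      Finset.sum_le_sum fun i _ => rowsum_le_norm (A ^ m) hAm0 i
    rw [Finset.sum_const, Finset.card_univ, Fintype.card_fin, nsmul_eq_mul] at h2
    exact le_trans h1 h2
  refine le_trans halow (le_specRad_of_pow hn A (a 1) hr0 fun t => ?_)
  exact le_trans (hpowt t) (hbound _)


/-- For nonnegative `A` with two smallest diagonal entries `b₁₁, b₂₂`
and `x_{jk} = min{a_{jk}, a_{kj}}`,
`ρ(A) ≥ (b₁₁+b₂₂)/2 + max_k (∑_{j ≠ k} x_{jk}²)^{1/2}`. -/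
theorem stmt10 {n : ℕ} (hn : 2 ≤ n) (A : Matrix (Fin n) (Fin n) ℝ)
    (hnn : ∀ i j, 0 ≤ A i j)
    (σ : Equiv.Perm (Fin n)) (hσ : Monotone (A.diag ∘ σ)) :
    (A.diag (σ ⟨0, by omega⟩) + A.diag (σ ⟨1, by omega⟩)) / 2
      + (⨆ k : Fin n, Real.sqrt (∑ j ∈ Finset.univ.erase k, (min (A j k) (A k j)) ^ 2))
      ≤ specRad A := by
  classical
  have hne : Nonempty (Fin n) := ⟨⟨0, by omega⟩⟩
  simp only [Matrix.diag_apply]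
  have key : ∀ k : Fin n,
      (A (σ ⟨0, by omega⟩) (σ ⟨0, by omega⟩) + A (σ ⟨1, by omega⟩) (σ ⟨1, by omega⟩)) / 2
        + Real.sqrt (∑ j ∈ Finset.univ.erase k, (min (A j k) (A k j)) ^ 2) ≤ specRad A := by
    intro k
    have hdp : ∀ {j k' : Fin n}, j ≠ k' →
        A (σ ⟨0, by omega⟩) (σ ⟨0, by omega⟩) + A (σ ⟨1, by omega⟩) (σ ⟨1, by omega⟩)
          ≤ A j j + A k' k' := by
      intro j k' hjk
      have := diag_pair hn A σ hσ hjk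
      simpa only [Matrix.diag_apply] using this
    set S := ∑ j ∈ Finset.univ.erase k, (min (A j k) (A k j)) ^ 2 with hS
    have hS0 : 0 ≤ S := Finset.sum_nonneg fun j _ => sq_nonneg _
    by_cases hSz : S = 0
    · rw [hSz, Real.sqrt_zero, add_zero]
      have hi01 : σ (⟨1, by omega⟩ : Fin n) ≠ σ (⟨0, by omega⟩ : Fin n) := by
        intro h
        have h2 := σ.injective h
        have : (1 : ℕ) = 0 := congrArg Fin.val h2
        omega
      set j0 : Fin n := if k = σ ⟨0, by omega⟩ then σ ⟨1, by omega⟩ else σ ⟨0, by omega⟩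
        with hj0
      have hj0k : j0 ≠ k := by
        by_cases h : k = σ (⟨0, by omega⟩ : Fin n)
        · rw [hj0, if_pos h]
          intro hh
          exact hi01 (hh.trans h)
        · rw [hj0, if_neg h]
          exact fun hh => h hh.symm
      set u : Fin n → ℝ := fun j => if j = j0 then 1 else 0 with hu
      have hu0 : ∀ j, 0 ≤ u j := by
        intro j; rw [hu]; dsimp only; split <;> norm_num
      have huk : u k = 0 := by
        rw [hu]; dsimp only; rw [if_neg (fun h => hj0k h.symm)]
      have hu1 : ∑ j, u j ^ 2 = 1 := by
        have : ∀ j, u j ^ 2 = if j = j0 then 1 else 0 := by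
          intro j; rw [hu]; dsimp only; split <;> norm_num
        rw [Finset.sum_congr rfl fun j _ => this j, Finset.sum_ite_eq' Finset.univ j0]
        simp
      have h1 := main_aux hn A hnn k u hu0 huk hu1
      have h2 : ∑ j, u j ^ 2 * A j j = A j0 j0 := by
        have : ∀ j, u j ^ 2 * A j j = if j = j0 then A j j else 0 := by
          intro j; rw [hu]; dsimp only; split <;> norm_num
        rw [Finset.sum_congr rfl fun j _ => this j, Finset.sum_ite_eq' Finset.univ j0]
        simp
      have h3 : ∑ j, u j * min (A j k) (A k j) = min (A j0 k) (A k j0) := by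
        have : ∀ j, u j * min (A j k) (A k j) = if j = j0 then min (A j k) (A k j) else 0 := by
          intro j; rw [hu]; dsimp only; split <;> norm_num
        rw [Finset.sum_congr rfl fun j _ => this j, Finset.sum_ite_eq' Finset.univ j0]
        simp
      rw [h2, h3] at h1
      have h4 := hdp hj0k
      have h5 : 0 ≤ min (A j0 k) (A k j0) := le_min (hnn j0 k) (hnn k j0)
      linarith
    · have hSpos : 0 < S := lt_of_le_of_ne hS0 (Ne.symm hSz)
      have hs : 0 < Real.sqrt S := Real.sqrt_pos.mpr hSpos
      have hss : Real.sqrt S ^ 2 = S := Real.sq_sqrt hS0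
      set s := Real.sqrt S with hsdef
      set u : Fin n → ℝ := fun j => if j = k then 0 else min (A j k) (A k j) / s with hu
      have hu0 : ∀ j, 0 ≤ u j := by
        intro j; rw [hu]; dsimp only; split
        · exact le_refl 0
        · exact div_nonneg (le_min (hnn j k) (hnn k j)) hs.le
      have huk : u k = 0 := by simp [hu]
      have herase : ∀ (f : Fin n → ℝ),
          ∑ j, (if j = k then 0 else f j) = ∑ j ∈ Finset.univ.erase k, f j := by
        intro f
        rw [← Finset.sum_erase (f := fun j => if j = k then 0 else f j) (a := k)
          Finset.univ (by simp)]
        refine Finset.sum_congr rfl fun j hj => ?_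
        rw [if_neg (Finset.mem_erase.mp hj).1]
      have hu1 : ∑ j, u j ^ 2 = 1 := by
        have h1 : ∀ j, u j ^ 2 = if j = k then 0 else (min (A j k) (A k j)) ^ 2 / s ^ 2 := by
          intro j; rw [hu]; dsimp only; split
          · norm_num
          · rw [div_pow]
        rw [Finset.sum_congr rfl fun j _ => h1 j, herase, ← Finset.sum_div, ← hS, hss]
        exact div_self (ne_of_gt hSpos)
      have h1 := main_aux hn A hnn k u hu0 huk hu1
      have h3 : ∑ j, u j * min (A j k) (A k j) = s := by
        have hh : ∀ j, u j * min (A j k) (A k j)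
            = if j = k then 0 else (min (A j k) (A k j)) ^ 2 / s := by
          intro j; rw [hu]; dsimp only; split
          · norm_num
          · rw [sq]; ring
        rw [Finset.sum_congr rfl fun j _ => hh j, herase, ← Finset.sum_div, ← hS, ← hss, sq]
        field_simp
      have h4 : A (σ ⟨0, by omega⟩) (σ ⟨0, by omega⟩) + A (σ ⟨1, by omega⟩) (σ ⟨1, by omega⟩)
          - A k k ≤ ∑ j, u j ^ 2 * A j j := by
        have per : ∀ j, u j ^ 2 * (A (σ ⟨0, by omega⟩) (σ ⟨0, by omega⟩)
            + A (σ ⟨1, by omega⟩) (σ ⟨1, by omega⟩) - A k k) ≤ u j ^ 2 * A j j := by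
          intro j
          by_cases h : j = k
          · subst h
            rw [huk]
            norm_num
          · refine mul_le_mul_of_nonneg_left ?_ (sq_nonneg _)
            have := hdp h
            linarith
        have hsum := Finset.sum_le_sum (fun j (_ : j ∈ Finset.univ) => per j)
        rw [← Finset.sum_mul, hu1, one_mul] at hsum
        exact hsum
      rw [h3] at h1
      linarith
  have h2 := ciSup_le fun k => (by linarith [key k] :
    Real.sqrt (∑ j ∈ Finset.univ.erase k, (min (A j k) (A k j)) ^ 2)
      ≤ specRad A - (A (σ ⟨0, by omega⟩) (σ ⟨0, by omega⟩)
        + A (σ ⟨1, by omega⟩) (σ ⟨1, by omega⟩)) / 2)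
  linarith
end

section
/- Let A be an n×n symmetric matrix with nonnegative entries all of whose diagonal entries equal a₁₁. Then λ_max(A) ≥ a₁₁ + ( tr(A²)/n − (tr A/n)² )^{1/2}. -/
open Matrix BigOperators Finset

section Aux

variable {n : ℕ} {A : Matrix (Fin n) (Fin n) ℝ}


lemma aux_trace (hA : A.IsHermitian) : A.trace = ∑ i, hA.eigenvalues i := by
  conv_lhs => rw [hA.spectral_theorem, Unitary.conjStarAlgAut_apply]
  rw [Matrix.trace_mul_cycle]
  simp [Matrix.trace, Matrix.diag]

lemma aux_trace_sq (hA : A.IsHermitian) : (A ^ 2).trace = ∑ i, hA.eigenvalues i ^ 2 := by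
  set U := (hA.eigenvectorUnitary : Matrix (Fin n) (Fin n) ℝ) with hU
  have h1 : U * star U = 1 := Matrix.mem_unitaryGroup_iff.mp hA.eigenvectorUnitary.2
  have hD := hA.conjStarAlgAut_star_eigenvectorUnitary
  rw [Unitary.conjStarAlgAut_star_apply] at hD
  have h3 : star U * (A * A) * U =
      Matrix.diagonal (RCLike.ofReal ∘ hA.eigenvalues) * Matrix.diagonal (RCLike.ofReal ∘ hA.eigenvalues) := by
    rw [← hD]
    calc star U * (A * A) * U = star U * A * ((U * star U) * (A * U)) := by
          rw [h1]; noncomm_ring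
      _ = star U * A * U * (star U * A * U) := by noncomm_ring
  have h4 : (A ^ 2).trace = (star U * (A * A) * U).trace := by
    rw [Matrix.trace_mul_cycle, ← Matrix.mul_assoc, h1, Matrix.one_mul, sq]
  rw [h4, h3, Matrix.diagonal_mul_diagonal]
  simp [Matrix.trace, Matrix.diag, sq]


lemma aux_rayleigh (hn : 0 < n) (hA : A.IsHermitian) (w : Fin n → ℝ) (hw : w ⬝ᵥ w = 1) :
    w ⬝ᵥ (A *ᵥ w) ≤ ⨆ i, hA.eigenvalues i := by
  haveI : Nonempty (Fin n) := ⟨⟨0, hn⟩⟩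
  set U := (hA.eigenvectorUnitary : Matrix (Fin n) (Fin n) ℝ) with hUdef
  have h1 : U * star U = 1 := Matrix.mem_unitaryGroup_iff.mp hA.eigenvectorUnitary.2
  set c : Fin n → ℝ := star U *ᵥ w with hc
  have hsU : star U = Uᵀ := by
    ext i j; simp [Matrix.conjTranspose_apply]
  have hdot : ∀ x : Fin n → ℝ, w ⬝ᵥ (U *ᵥ x) = c ⬝ᵥ x := by
    intro x
    rw [hc, hsU, dotProduct_mulVec, ← Matrix.mulVec_transpose]
  have hcc : c ⬝ᵥ c = 1 := by
    rw [hc]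
    nth_rewrite 1 [hsU]
    rw [Matrix.mulVec_transpose, ← dotProduct_mulVec, Matrix.mulVec_mulVec, h1, Matrix.one_mulVec, hw]
  have hQ : w ⬝ᵥ (A *ᵥ w) = ∑ i, hA.eigenvalues i * c i ^ 2 := by
    conv_lhs => rw [hA.spectral_theorem, Unitary.conjStarAlgAut_apply]
    rw [← Matrix.mulVec_mulVec, ← Matrix.mulVec_mulVec, hdot, ← hc]
    simp [Matrix.mulVec_diagonal, dotProduct, sq]
    ring_nf
    apply Finset.sum_congr rfl
    intro i _
    ring
  have hbdd : BddAbove (Set.range hA.eigenvalues) := Set.Finite.bddAbove (Set.finite_range _)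
  have hle : ∀ i, hA.eigenvalues i ≤ ⨆ j, hA.eigenvalues j := fun i => le_ciSup hbdd i
  calc w ⬝ᵥ (A *ᵥ w) = ∑ i, hA.eigenvalues i * c i ^ 2 := hQ
    _ ≤ ∑ i, (⨆ j, hA.eigenvalues j) * c i ^ 2 := by
        apply Finset.sum_le_sum
        intro i _
        exact mul_le_mul_of_nonneg_right (hle i) (sq_nonneg _)
    _ = (⨆ j, hA.eigenvalues j) * (c ⬝ᵥ c) := by
        rw [← Finset.mul_sum]; congr 1; simp [dotProduct, sq]
    _ = ⨆ j, hA.eigenvalues j := by rw [hcc, mul_one]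

lemma aux_key (hn : 0 < n) (hA : A.IsHermitian) (hnn : ∀ i j, 0 ≤ A i j)
    (hd : ∀ i, A i i = A ⟨0, hn⟩ ⟨0, hn⟩) (j : Fin n) :
    A ⟨0, hn⟩ ⟨0, hn⟩ + |hA.eigenvalues j - A ⟨0, hn⟩ ⟨0, hn⟩| ≤ ⨆ i, hA.eigenvalues i := by
  haveI : Nonempty (Fin n) := ⟨⟨0, hn⟩⟩
  set a := A ⟨0, hn⟩ ⟨0, hn⟩ with ha
  set v : Fin n → ℝ := ⇑(hA.eigenvectorBasis j) with hv
  have hbdd : BddAbove (Set.range hA.eigenvalues) := Set.Finite.bddAbove (Set.finite_range _)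
  have hle : ∀ i, hA.eigenvalues i ≤ ⨆ k, hA.eigenvalues k := fun i => le_ciSup hbdd i
  -- norm of eigenvector
  have hnorm : ‖hA.eigenvectorBasis j‖ = 1 := hA.eigenvectorBasis.orthonormal.1 j
  have hv1 : ∑ i, v i ^ 2 = 1 := by
    have h := congrArg (· ^ 2) hnorm
    rw [EuclideanSpace.norm_eq] at h
    simp only [Real.norm_eq_abs, sq_abs, one_pow] at h
    rwa [Real.sq_sqrt (Finset.sum_nonneg fun i _ => sq_nonneg _)] at h
  have hvv : v ⬝ᵥ v = 1 := by
    rw [dotProduct]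
    simpa [sq] using hv1
  have hv2 : v ⬝ᵥ (A *ᵥ v) = hA.eigenvalues j := by
    rw [hv, hA.mulVec_eigenvectorBasis, dotProduct_smul, smul_eq_mul, ← hv, hvv, mul_one]
  rcases le_or_gt a (hA.eigenvalues j) with hcase | hcase
  · rw [abs_of_nonneg (by linarith)]
    have := hle j
    linarith
  · rw [abs_of_neg (by linarith)]
    set w : Fin n → ℝ := fun i => |v i| with hwdef
    have hww : w ⬝ᵥ w = 1 := by
      rw [dotProduct]
      simpa [hwdef, ← sq, sq_abs] using hv1
    have hray := aux_rayleigh hn hA w hww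
    -- Q(w) + Q(v) ≥ 2a
    have hQw : w ⬝ᵥ (A *ᵥ w) = ∑ i, ∑ k, A i k * (w i * w k) := by
      simp [dotProduct, Matrix.mulVec, Finset.mul_sum]
      apply Finset.sum_congr rfl; intro i _
      apply Finset.sum_congr rfl; intro k _; ring
    have hQv : v ⬝ᵥ (A *ᵥ v) = ∑ i, ∑ k, A i k * (v i * v k) := by
      simp [dotProduct, Matrix.mulVec, Finset.mul_sum]
      apply Finset.sum_congr rfl; intro i _
      apply Finset.sum_congr rfl; intro k _; ring
    have hsum : 2 * a ≤ w ⬝ᵥ (A *ᵥ w) + v ⬝ᵥ (A *ᵥ v) := by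
      rw [hQw, hQv]
      simp only [← Finset.sum_add_distrib]
      have : ∀ i : Fin n, (2 * a) * v i ^ 2 ≤
          ∑ k, (A i k * (w i * w k) + A i k * (v i * v k)) := by
        intro i
        have hterm : ∀ k ∈ Finset.univ, (0:ℝ) ≤ A i k * (w i * w k) + A i k * (v i * v k) := by
          intro k _
          have h1 : -(|v i| * |v k|) ≤ v i * v k := by
            rw [← abs_mul]; exact neg_abs_le _
          have h2 : (0:ℝ) ≤ w i * w k + v i * v k := by
            have : w i * w k = |v i| * |v k| := rfl
            rw [this]; linarith
          calc (0:ℝ) = A i k * 0 := by ring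
            _ ≤ A i k * (w i * w k + v i * v k) := mul_le_mul_of_nonneg_left h2 (hnn i k)
            _ = A i k * (w i * w k) + A i k * (v i * v k) := by ring
        have hdiag : (2 * a) * v i ^ 2 = A i i * (w i * w i) + A i i * (v i * v i) := by
          rw [hwdef]
          simp only [← abs_mul, abs_mul_self]
          rw [hd i]
          ring
        rw [hdiag]
        exact Finset.single_le_sum hterm (Finset.mem_univ i)
      calc 2 * a = ∑ i, (2 * a) * v i ^ 2 := by rw [← Finset.mul_sum, hv1, mul_one]
        _ ≤ _ := Finset.sum_le_sum (fun i _ => this i)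
    rw [hv2] at hsum
    linarith

end Aux

/-- For a nonnegative symmetric matrix all of whose diagonal entries
equal `a₁₁`, `λ_max(A) ≥ a₁₁ + (tr(A²)/n − (tr A/n)²)^{1/2}`. -/
theorem stmt12 {n : ℕ} (hn : 0 < n) (A : Matrix (Fin n) (Fin n) ℝ)
    (hA : A.IsHermitian) (hnn : ∀ i j, 0 ≤ A i j)
    (hd : ∀ i, A i i = A ⟨0, hn⟩ ⟨0, hn⟩) :
    A ⟨0, hn⟩ ⟨0, hn⟩ + Real.sqrt ((A ^ 2).trace / n - (A.trace / n) ^ 2)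
      ≤ ⨆ i, hA.eigenvalues i := by
  haveI : Nonempty (Fin n) := ⟨⟨0, hn⟩⟩
  set a := A ⟨0, hn⟩ ⟨0, hn⟩ with ha
  set M := ⨆ i, hA.eigenvalues i with hM
  have hnR : (0:ℝ) < n := by exact_mod_cast hn
  have key := aux_key hn hA hnn hd
  have hMa : a ≤ M := by
    have := key ⟨0, hn⟩
    have := abs_nonneg (hA.eigenvalues ⟨0, hn⟩ - a)
    linarith
  have htr : A.trace = n * a := by
    rw [Matrix.trace]
    simp only [Matrix.diag]
    rw [Finset.sum_congr rfl (fun i _ => hd i)]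
    simp [mul_comm]
  have hsum : ∑ i, hA.eigenvalues i = n * a := by rw [← aux_trace hA, htr]
  have hsq : ∑ i, hA.eigenvalues i ^ 2 = (A ^ 2).trace := (aux_trace_sq hA).symm
  have hdev : ∑ i, (hA.eigenvalues i - a) ^ 2 = (A ^ 2).trace - n * a ^ 2 := by
    have : ∑ i, (hA.eigenvalues i - a) ^ 2
        = ∑ i, hA.eigenvalues i ^ 2 - 2 * a * (∑ i, hA.eigenvalues i) + n * a ^ 2 := by
      rw [Finset.mul_sum]
      rw [show ((n:ℝ) * a ^ 2) = ∑ _i : Fin n, a ^ 2 by simp [mul_comm]]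
      rw [← Finset.sum_sub_distrib, ← Finset.sum_add_distrib]
      apply Finset.sum_congr rfl; intro i _; ring
    rw [this, hsum, hsq]; ring
  have hbound : ∑ i, (hA.eigenvalues i - a) ^ 2 ≤ n * (M - a) ^ 2 := by
    rw [show ((n:ℝ) * (M - a) ^ 2) = ∑ _i : Fin n, (M - a) ^ 2 by simp [mul_comm]]
    apply Finset.sum_le_sum
    intro i _
    have h1 := key i
    have h2 : |hA.eigenvalues i - a| ≤ M - a := by linarith
    calc (hA.eigenvalues i - a) ^ 2 = |hA.eigenvalues i - a| ^ 2 := (sq_abs _).symm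
      _ ≤ (M - a) ^ 2 := by
          apply pow_le_pow_left₀ (abs_nonneg _) h2
  have hexpr : (A ^ 2).trace / n - (A.trace / n) ^ 2 ≤ (M - a) ^ 2 := by
    rw [htr]
    rw [show ((n:ℝ) * a / n) = a by field_simp]
    rw [div_sub' (ne_of_gt hnR)]
    rw [div_le_iff₀ hnR]
    rw [← hdev]
    calc ∑ i, (hA.eigenvalues i - a) ^ 2 ≤ n * (M - a) ^ 2 := hbound
      _ = (M - a) ^ 2 * n := by ring
  have hsqrt : Real.sqrt ((A ^ 2).trace / n - (A.trace / n) ^ 2) ≤ M - a := by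
    calc Real.sqrt ((A ^ 2).trace / n - (A.trace / n) ^ 2)
        ≤ Real.sqrt ((M - a) ^ 2) := Real.sqrt_le_sqrt hexpr
      _ = |M - a| := Real.sqrt_sq_eq_abs _
      _ = M - a := abs_of_nonneg (by linarith)
  linarith
end

section
/- Let A be an n×n Hermitian matrix and s = ( tr(A²)/n − (tr A/n)² )^{1/2}. Then λ_max(A) ≥ tr(A)/n + s/√(n−1). -/
open Matrix BigOperators Finset

lemma trace_eq_sum_eig {n : ℕ} (A : Matrix (Fin n) (Fin n) ℂ) (hA : A.IsHermitian) :
    A.trace = ∑ i, (hA.eigenvalues i : ℂ) := by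
  conv_lhs => rw [hA.spectral_theorem, Unitary.conjStarAlgAut_apply]
  rw [Matrix.trace_mul_cycle, Unitary.coe_star_mul_self, one_mul, Matrix.trace_diagonal]
  rfl

lemma trace_sq_eq_sum_eig {n : ℕ} (A : Matrix (Fin n) (Fin n) ℂ) (hA : A.IsHermitian) :
    (A ^ 2).trace = ∑ i, (hA.eigenvalues i : ℂ) ^ 2 := by
  have h : A ^ 2 = (hA.eigenvectorUnitary : Matrix (Fin n) (Fin n) ℂ)
      * (diagonal (RCLike.ofReal ∘ hA.eigenvalues) * diagonal (RCLike.ofReal ∘ hA.eigenvalues))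
      * (star (hA.eigenvectorUnitary : Matrix (Fin n) (Fin n) ℂ)) := by
    conv_lhs => rw [pow_two, hA.spectral_theorem, Unitary.conjStarAlgAut_apply]
    simp only [Matrix.mul_assoc]
    rw [← Matrix.mul_assoc (star (hA.eigenvectorUnitary : Matrix (Fin n) (Fin n) ℂ)),
      Unitary.coe_star_mul_self, one_mul]
  rw [h, Matrix.trace_mul_cycle, Unitary.coe_star_mul_self, one_mul,
    Matrix.diagonal_mul_diagonal, Matrix.trace_diagonal]
  simp [pow_two]

/-- Wolkowicz–Styan: For a Hermitian matrix `A` with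
`s = (tr(A²)/n − (tr A/n)²)^{1/2}`, `λ_max(A) ≥ tr(A)/n + s/√(n−1)`. -/
theorem stmt18 {n : ℕ} (hn : 2 ≤ n) (A : Matrix (Fin n) (Fin n) ℂ)
    (hA : A.IsHermitian) :
    A.trace.re / n
        + Real.sqrt ((A ^ 2).trace.re / n - (A.trace.re / n) ^ 2) / Real.sqrt (n - 1)
      ≤ ⨆ i, hA.eigenvalues i := by
  have hn0 : (0:ℝ) < n := by positivity
  have hn1 : (0:ℝ) < (n:ℝ) - 1 := by
    have : (2:ℝ) ≤ n := by exact_mod_cast hn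
    linarith
  set μ : Fin n → ℝ := hA.eigenvalues with hμ
  have htr : A.trace.re = ∑ i, μ i := by
    rw [trace_eq_sum_eig A hA, ← Complex.ofReal_sum, Complex.ofReal_re]
  have htr2 : (A ^ 2).trace.re = ∑ i, (μ i) ^ 2 := by
    rw [trace_sq_eq_sum_eig A hA]
    simp only [← Complex.ofReal_pow]
    rw [← Complex.ofReal_sum, Complex.ofReal_re]
  set m : ℝ := A.trace.re / n with hm
  have : Nonempty (Fin n) := ⟨⟨0, by omega⟩⟩
  set M : ℝ := ⨆ i, μ i with hM
  have hle : ∀ i, μ i ≤ M := fun i => le_ciSup (Set.Finite.bddAbove (Set.finite_range μ)) i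
  have hsum : ∑ i, μ i = n * m := by
    rw [hm, htr]; field_simp
  have hmM : m ≤ M := by
    have : ∑ i, μ i ≤ ∑ _i : Fin n, M := Finset.sum_le_sum fun i _ => hle i
    rw [hsum, Finset.sum_const, Finset.card_univ, Fintype.card_fin, nsmul_eq_mul] at this
    nlinarith
  -- lower bound on each eigenvalue
  have hlow : ∀ i, -((n:ℝ) - 1) * (M - m) ≤ μ i - m := by
    intro i
    have h1 : ∑ j ∈ univ.erase i, μ j ≤ ∑ _j ∈ univ.erase i, M :=
      Finset.sum_le_sum fun j _ => hle j
    have hcard : (univ.erase i).card = n - 1 := by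
      rw [Finset.card_erase_of_mem (mem_univ i), Finset.card_univ, Fintype.card_fin]
    have h2 : ∑ j ∈ univ.erase i, μ j = n * m - μ i := by
      have := Finset.add_sum_erase univ μ (mem_univ i)
      rw [hsum] at this; linarith
    rw [h2, Finset.sum_const, hcard, nsmul_eq_mul] at h1
    have hc : ((n - 1 : ℕ) : ℝ) = (n:ℝ) - 1 := by
      have : 1 ≤ n := by omega
      push_cast [this]; ring
    rw [hc] at h1
    nlinarith
  -- key sum inequality
  have hkey : ∑ i, (μ i - m) ^ 2 ≤ n * (((n:ℝ) - 1) * (M - m) ^ 2) := by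
    have hpt : ∀ i, (μ i - m) ^ 2 ≤
        ((n:ℝ) - 1) * (M - m) ^ 2 - ((n:ℝ) - 2) * ((M - m) * (μ i - m)) := by
      intro i
      have h1 := hle i
      have h2 := hlow i
      nlinarith [h1, h2]
    calc ∑ i, (μ i - m) ^ 2
        ≤ ∑ i, (((n:ℝ) - 1) * (M - m) ^ 2 - ((n:ℝ) - 2) * ((M - m) * (μ i - m))) :=
          Finset.sum_le_sum fun i _ => hpt i
      _ = n * (((n:ℝ) - 1) * (M - m) ^ 2)
          - ((n:ℝ) - 2) * ((M - m) * (∑ i, (μ i - m))) := by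
          rw [Finset.sum_sub_distrib, Finset.sum_const, Finset.card_univ, Fintype.card_fin,
            nsmul_eq_mul, ← Finset.mul_sum, ← Finset.mul_sum]
      _ = n * (((n:ℝ) - 1) * (M - m) ^ 2) := by
          have : ∑ i, (μ i - m) = 0 := by
            rw [Finset.sum_sub_distrib, hsum, Finset.sum_const, Finset.card_univ,
              Fintype.card_fin, nsmul_eq_mul]
            ring
          rw [this]; ring
  -- variance identity
  have hvar : (A ^ 2).trace.re / n - m ^ 2 = (∑ i, (μ i - m) ^ 2) / n := by
    rw [htr2]
    have : ∑ i, (μ i - m) ^ 2 = (∑ i, (μ i) ^ 2) - n * m ^ 2 := by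
      have expand : ∑ i, (μ i - m) ^ 2
          = (∑ i, (μ i) ^ 2) - 2 * m * (∑ i, μ i) + n * m ^ 2 := by
        rw [Finset.sum_congr rfl (fun i _ => by ring :
          ∀ i ∈ univ, (μ i - m) ^ 2 = (μ i) ^ 2 - 2 * m * μ i + m ^ 2)]
        rw [Finset.sum_add_distrib, Finset.sum_sub_distrib, ← Finset.mul_sum,
          Finset.sum_const, Finset.card_univ, Fintype.card_fin, nsmul_eq_mul]
      rw [expand, hsum]; ring
    rw [this]
    field_simp
  have hsq : (A ^ 2).trace.re / n - m ^ 2 ≤ ((n:ℝ) - 1) * (M - m) ^ 2 := by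
    rw [hvar]
    rw [div_le_iff₀ hn0]
    calc ∑ i, (μ i - m) ^ 2 ≤ n * (((n:ℝ) - 1) * (M - m) ^ 2) := hkey
      _ = ((n:ℝ) - 1) * (M - m) ^ 2 * n := by ring
  have hsqrt : Real.sqrt ((A ^ 2).trace.re / n - m ^ 2) ≤ Real.sqrt ((n:ℝ) - 1) * (M - m) := by
    calc Real.sqrt ((A ^ 2).trace.re / n - m ^ 2)
        ≤ Real.sqrt (((n:ℝ) - 1) * (M - m) ^ 2) := Real.sqrt_le_sqrt hsq
      _ = Real.sqrt ((n:ℝ) - 1) * (M - m) := by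
          rw [Real.sqrt_mul hn1.le, Real.sqrt_sq (by linarith)]
  have hsn : (0:ℝ) < Real.sqrt ((n:ℝ) - 1) := Real.sqrt_pos.mpr hn1
  have : Real.sqrt ((A ^ 2).trace.re / n - m ^ 2) / Real.sqrt ((n:ℝ) - 1) ≤ M - m := by
    rw [div_le_iff₀ hsn]
    calc Real.sqrt ((A ^ 2).trace.re / n - m ^ 2) ≤ Real.sqrt ((n:ℝ) - 1) * (M - m) := hsqrt
      _ = (M - m) * Real.sqrt ((n:ℝ) - 1) := by ring
  linarith
end
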